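/- Let X and Y be finite sets with |X| ≥ 2 and |Y| ≥ 2, and let p : X → ℝ, q : Y → ℝ be strictly positive with ∑_x p_x = ∑_y q_y = 1. Let μ̂ ∈ M with μ̂ ≠ p ⊗ q, let t* = max{t ≥ 1 : p ⊗ q + t(μ̂ − p ⊗ q) ∈ M}, and set μ* = p ⊗ q + t*(μ̂ − p ⊗ q). Then μ* lies on the relative boundary of M (μ* ∈ M but μ* is not in the relative interior of M); consequently μ* is rationalizable: there exists a non-separable Φ such that μ* maximizes ⟨·, Φ⟩ over M. Moreover, if μ̂ itself is rationalizable then t* = 1 and μ* = μ̂. -/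

import Mathlib

/-!
The points `p ⊗ q + t (μ̂ - p ⊗ q)` form a line in the affine span of `M`, so the last of them
in `M`, `μ*`, cannot lie in the relative interior of `M`; and `μ*` has a zero entry, since
otherwise a small step further along the line would stay in `M`. A zero entry at `(x₁, y₁)` is
rationalized by minus the indicator of `(x₁, y₁)`, which is not separable once `|X|, |Y| ≥ 2`.
Conversely, a maximizer with full support, such as `p ⊗ q`, can be perturbed in both directions
along every rectangle `(e_x - e_x') ⊗ (e_y - e_y')`, so all cross differences
`Φ x y + Φ x' y' - Φ x y' - Φ x' y` vanish and `Φ` is separable. If `t* > 1`, then `μ̂` lies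
strictly between `p ⊗ q` and `μ*`, so a linear objective maximized at `μ̂` is also maximized
at `p ⊗ q`.
-/

open Finset

/-- The set of matchings with marginals `p` and `q`. -/
def matchings {X Y : Type*} [Fintype X] [Fintype Y] (p : X → ℝ) (q : Y → ℝ) :
    Set (X → Y → ℝ) :=
  {μ | (∀ x y, 0 ≤ μ x y) ∧ (∀ x, ∑ y, μ x y = p x) ∧ (∀ y, ∑ x, μ x y = q y)}

/-- Total surplus `⟨μ, Φ⟩ = ∑_{x,y} μ_{xy} Φ_{xy}`. -/
def pairing {X Y : Type*} [Fintype X] [Fintype Y] (μ Φ : X → Y → ℝ) : ℝ :=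
  ∑ x, ∑ y, μ x y * Φ x y

open AffineMap Filter Topology

theorem eventually_lineMap_mem_of_mem_intrinsicInterior {E : Type*} [AddCommGroup E]
    [Module ℝ E] [TopologicalSpace E] [IsTopologicalAddGroup E] [ContinuousSMul ℝ E]
    {s : Set E} {a b : E} (ha : a ∈ affineSpan ℝ s) (hb : b ∈ affineSpan ℝ s) {t : ℝ}
    (ht : lineMap a b t ∈ intrinsicInterior ℝ s) :
    ∀ᶠ u in 𝓝 t, lineMap a b u ∈ s := by
  obtain ⟨z, hz, hzt⟩ := mem_intrinsicInterior.1 ht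
  let φ : ℝ → affineSpan ℝ s := fun u => ⟨lineMap a b u, lineMap_mem u ha hb⟩
  have hφ : Continuous φ := lineMap_continuous.subtype_mk _
  have hφt : φ t = z := Subtype.ext hzt.symm
  have : ∀ᶠ u in 𝓝 t, φ u ∈ interior ((↑) ⁻¹' s : Set (affineSpan ℝ s)) :=
    hφ.continuousAt (hφt ▸ isOpen_interior.mem_nhds hz)
  exact this.mono fun _ hu => interior_subset (s := ((↑) ⁻¹' s : Set (affineSpan ℝ s))) hu

theorem lineMap_notMem_intrinsicInterior {E : Type*} [AddCommGroup E] [Module ℝ E]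
    [TopologicalSpace E] [IsTopologicalAddGroup E] [ContinuousSMul ℝ E] {s : Set E} {a b : E}
    (ha : a ∈ affineSpan ℝ s) (hb : b ∈ affineSpan ℝ s) {t : ℝ}
    (hlast : ∀ u > t, lineMap a b u ∉ s) :
    lineMap a b t ∉ intrinsicInterior ℝ s := fun h =>
  let ⟨u, hu, hmem⟩ := (eventually_lineMap_mem_of_mem_intrinsicInterior ha hb h).exists_gt
  hlast u hu hmem

section Matchings

variable {X Y : Type*}

def IsAdditivelySeparable (Φ : X → Y → ℝ) : Prop :=
  ∃ (f : X → ℝ) (g : Y → ℝ), ∀ x y, Φ x y = f x + g y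

theorem isAdditivelySeparable_iff_add_eq_add {Φ : X → Y → ℝ} :
    IsAdditivelySeparable Φ ↔ ∀ x x' y y', Φ x y + Φ x' y' = Φ x y' + Φ x' y := by
  refine ⟨fun ⟨f, g, hfg⟩ x x' y y' => by simp only [hfg]; ring, fun h => ?_⟩
  rcases isEmpty_or_nonempty X with _ | ⟨⟨x₀⟩⟩
  · exact ⟨0, 0, fun x => isEmptyElim x⟩
  rcases isEmpty_or_nonempty Y with _ | ⟨⟨y₀⟩⟩
  · exact ⟨0, 0, fun _ y => isEmptyElim y⟩
  exact ⟨fun x => Φ x y₀ - Φ x₀ y₀, fun y => Φ x₀ y, fun x y => by linarith [h x x₀ y y₀]⟩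

theorem lineMap_eq_add_mul (a b : X → Y → ℝ) (t : ℝ) :
    lineMap a b t = fun x y => a x y + t * (b x y - a x y) := by
  funext x y
  simp only [lineMap_apply_module', Pi.add_apply, Pi.smul_apply, Pi.sub_apply,
    smul_eq_mul]
  ring

variable [Fintype X] [Fintype Y] {p : X → ℝ} {q : Y → ℝ}

theorem not_isAdditivelySeparable_neg_indicator [DecidableEq X] [DecidableEq Y]
    (hX : 2 ≤ Fintype.card X) (hY : 2 ≤ Fintype.card Y) (x₁ : X) (y₁ : Y) :
    ¬ IsAdditivelySeparable fun x y => if x = x₁ ∧ y = y₁ then (-1 : ℝ) else 0 := by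
  obtain ⟨x₂, hx₂⟩ := Fintype.exists_ne_of_one_lt_card hX x₁
  obtain ⟨y₂, hy₂⟩ := Fintype.exists_ne_of_one_lt_card hY y₁
  intro h
  have := isAdditivelySeparable_iff_add_eq_add.1 h x₁ x₂ y₁ y₂
  simp [hx₂, hy₂] at this

theorem pairing_neg_indicator [DecidableEq X] [DecidableEq Y] (μ : X → Y → ℝ) (x₁ : X)
    (y₁ : Y) : pairing μ (fun x y => if x = x₁ ∧ y = y₁ then (-1 : ℝ) else 0) = -μ x₁ y₁ := by
  simp [pairing, ite_and, mul_ite]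

theorem pairing_add_mul (μ d Φ : X → Y → ℝ) (t : ℝ) :
    pairing (fun x y => μ x y + t * d x y) Φ = pairing μ Φ + t * pairing d Φ := by
  simp only [pairing, add_mul, Finset.sum_add_distrib, Finset.mul_sum, mul_assoc]

theorem pairing_lineMap (a b Φ : X → Y → ℝ) (t : ℝ) :
    pairing (lineMap a b t) Φ = pairing a Φ + t * (pairing b Φ - pairing a Φ) := by
  rw [lineMap_eq_add_mul, pairing_add_mul]
  simp only [pairing, sub_mul, Finset.sum_sub_distrib]

theorem indep_mem_matchings (hp : ∀ x, 0 ≤ p x) (hq : ∀ y, 0 ≤ q y) (hpsum : ∑ x, p x = 1)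
    (hqsum : ∑ y, q y = 1) : (fun x y => p x * q y) ∈ matchings p q :=
  ⟨fun x y => mul_nonneg (hp x) (hq y), fun x => by rw [← Finset.mul_sum, hqsum, mul_one],
    fun y => by rw [← Finset.sum_mul, hpsum, one_mul]⟩

theorem sum_sub_eq_zero_of_mem_matchings {μ ν : X → Y → ℝ} (hμ : μ ∈ matchings p q)
    (hν : ν ∈ matchings p q) :
    (∀ x, ∑ y, (μ x y - ν x y) = 0) ∧ ∀ y, ∑ x, (μ x y - ν x y) = 0 :=
  ⟨fun x => by rw [Finset.sum_sub_distrib, hμ.2.1, hν.2.1, sub_self],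
    fun y => by rw [Finset.sum_sub_distrib, hμ.2.2, hν.2.2, sub_self]⟩

theorem add_mul_mem_matchings {μ d : X → Y → ℝ} {t : ℝ} (hμ : μ ∈ matchings p q)
    (hrow : ∀ x, ∑ y, d x y = 0) (hcol : ∀ y, ∑ x, d x y = 0)
    (hnonneg : ∀ x y, 0 ≤ μ x y + t * d x y) :
    (fun x y => μ x y + t * d x y) ∈ matchings p q :=
  ⟨hnonneg, fun x => by rw [Finset.sum_add_distrib, ← Finset.mul_sum, hrow, hμ.2.1, mul_zero,
    add_zero], fun y => by rw [Finset.sum_add_distrib, ← Finset.mul_sum, hcol, hμ.2.2, mul_zero,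
    add_zero]⟩

theorem eventually_add_mul_mem_matchings {μ d : X → Y → ℝ} (hμ : μ ∈ matchings p q)
    (hpos : ∀ x y, 0 < μ x y) (hrow : ∀ x, ∑ y, d x y = 0) (hcol : ∀ y, ∑ x, d x y = 0) :
    ∀ᶠ t in 𝓝 (0 : ℝ), (fun x y => μ x y + t * d x y) ∈ matchings p q := by
  have : ∀ᶠ t in 𝓝 (0 : ℝ), ∀ x y, 0 < μ x y + t * d x y := by
    simp only [eventually_all]
    intro x y
    have hcont : Continuous fun t : ℝ => μ x y + t * d x y := by fun_prop
    exact continuousAt_const.eventually_lt hcont.continuousAt (by simpa using hpos x y)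
  exact this.mono fun t ht => add_mul_mem_matchings hμ hrow hcol fun x y => (ht x y).le

theorem exists_eq_zero_of_forall_add_mul_notMem {μ d : X → Y → ℝ} (hμ : μ ∈ matchings p q)
    (hrow : ∀ x, ∑ y, d x y = 0) (hcol : ∀ y, ∑ x, d x y = 0)
    (hlast : ∀ ε > 0, (fun x y => μ x y + ε * d x y) ∉ matchings p q) :
    ∃ x y, μ x y = 0 := by
  by_contra! hne
  have hpos : ∀ x y, 0 < μ x y := fun x y => (hμ.1 x y).lt_of_ne (hne x y).symm
  obtain ⟨ε, hε, hmem⟩ := (eventually_add_mul_mem_matchings hμ hpos hrow hcol).exists_gt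
  exact hlast ε hε hmem

theorem exists_not_isAdditivelySeparable_of_eq_zero (hX : 2 ≤ Fintype.card X)
    (hY : 2 ≤ Fintype.card Y) {ν : X → Y → ℝ} {x₁ : X} {y₁ : Y} (h₀ : ν x₁ y₁ = 0) :
    ∃ Φ : X → Y → ℝ, ¬ IsAdditivelySeparable Φ ∧
      ∀ μ ∈ matchings p q, pairing μ Φ ≤ pairing ν Φ := by
  classical
  refine ⟨_, not_isAdditivelySeparable_neg_indicator hX hY x₁ y₁, fun μ hμ => ?_⟩
  rw [pairing_neg_indicator, pairing_neg_indicator, h₀, neg_zero, neg_nonpos]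
  exact hμ.1 x₁ y₁

theorem isAdditivelySeparable_of_pos_of_isMaximizer {ν Φ : X → Y → ℝ} (hν : ν ∈ matchings p q)
    (hpos : ∀ x y, 0 < ν x y) (hmax : ∀ μ ∈ matchings p q, pairing μ Φ ≤ pairing ν Φ) :
    IsAdditivelySeparable Φ := by
  classical
  refine isAdditivelySeparable_iff_add_eq_add.2 fun x x' y y' => ?_
  let u : X → ℝ := fun a => (if a = x then 1 else 0) - if a = x' then 1 else 0
  let v : Y → ℝ := fun b => (if b = y then 1 else 0) - if b = y' then 1 else 0
  have hrect : pairing (fun a b => u a * v b) Φ = Φ x y + Φ x' y' - (Φ x y' + Φ x' y) := by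
    simp only [pairing, u, v, sub_mul, mul_sub, ite_mul, one_mul, zero_mul, mul_ite, mul_one,
      mul_zero, Finset.sum_sub_distrib, Finset.sum_ite_eq', Finset.mem_univ, if_true]
    ring
  have hlocal : IsLocalMax (fun t => pairing (fun a b => ν a b + t * (u a * v b)) Φ) 0 := by
    refine (eventually_add_mul_mem_matchings (d := fun a b => u a * v b) hν hpos
      (fun a => ?_) (fun b => ?_)).mono fun t ht => ?_
    · simp [v, ← Finset.mul_sum, Finset.sum_sub_distrib]
    · simp [u, ← Finset.sum_mul, Finset.sum_sub_distrib]
    · simpa using hmax _ ht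
  have hderiv : HasDerivAt (fun t => pairing (fun a b => ν a b + t * (u a * v b)) Φ)
      (pairing (fun a b => u a * v b) Φ) 0 := by
    simp only [pairing_add_mul]
    exact (hasDerivAt_mul_const _).const_add _
  linarith [hlocal.hasDerivAt_eq_zero hderiv]

end Matchings

theorem gauge_projection_rationalizable_general {X Y : Type*} [Fintype X] [Fintype Y]
    (hX : 2 ≤ Fintype.card X) (hY : 2 ≤ Fintype.card Y)
    (p : X → ℝ) (q : Y → ℝ)
    (hp : ∀ x, 0 < p x) (hq : ∀ y, 0 < q y)
    (hpsum : ∑ x, p x = 1) (hqsum : ∑ y, q y = 1)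
    (μhat : X → Y → ℝ) (hμhat : μhat ∈ matchings p q)
    (tstar : ℝ)
    (htstar : IsGreatest {t : ℝ | 1 ≤ t ∧
      (fun x y => p x * q y + t * (μhat x y - p x * q y)) ∈ matchings p q} tstar) :
    letI μstar : X → Y → ℝ := fun x y => p x * q y + tstar * (μhat x y - p x * q y)
    μstar ∈ matchings p q ∧
      μstar ∉ intrinsicInterior ℝ (matchings p q) ∧
      (∃ Φ : X → Y → ℝ,
        (¬ ∃ (f : X → ℝ) (g : Y → ℝ), ∀ x y, Φ x y = f x + g y) ∧
        ∀ μ ∈ matchings p q, pairing μ Φ ≤ pairing μstar Φ) ∧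
      ((∃ Φ : X → Y → ℝ,
          (¬ ∃ (f : X → ℝ) (g : Y → ℝ), ∀ x y, Φ x y = f x + g y) ∧
          ∀ μ ∈ matchings p q, pairing μ Φ ≤ pairing μhat Φ) →
        tstar = 1 ∧ μstar = μhat) := by
  have hpq := indep_mem_matchings (fun x => (hp x).le) (fun y => (hq y).le) hpsum hqsum
  obtain ⟨hrow, hcol⟩ := sum_sub_eq_zero_of_mem_matchings hμhat hpq
  have hline (t : ℝ) : (fun x y => p x * q y + t * (μhat x y - p x * q y)) =
      lineMap (fun x y => p x * q y) μhat t :=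
    (lineMap_eq_add_mul _ _ t).symm
  simp only [hline] at htstar ⊢
  have hlast : ∀ t > tstar, lineMap (fun x y => p x * q y) μhat t ∉ matchings p q :=
    fun t ht hmem => (htstar.2 ⟨htstar.1.1.trans ht.le, hmem⟩).not_gt ht
  refine ⟨htstar.1.2, lineMap_notMem_intrinsicInterior
    (subset_affineSpan ℝ _ hpq) (subset_affineSpan ℝ _ hμhat) hlast, ?_, ?_⟩
  · obtain ⟨x₁, y₁, h₀⟩ := exists_eq_zero_of_forall_add_mul_notMem htstar.1.2 hrow hcol
      fun ε hε hmem => hlast (tstar + ε) (by linarith) <| by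
        convert hmem using 3
        simp only [lineMap_eq_add_mul]
        ring
    exact exists_not_isAdditivelySeparable_of_eq_zero hX hY h₀
  rintro ⟨Φ, hΦ, hmax⟩
  have htstar_eq : tstar = 1 := by
    by_contra hne
    have hlt : 1 < tstar := htstar.1.1.lt_of_ne (Ne.symm hne)
    have hpq_le := hmax _ hpq
    have hμstar_le := hmax _ htstar.1.2
    rw [pairing_lineMap] at hμstar_le
    refine hΦ (isAdditivelySeparable_of_pos_of_isMaximizer hpq (fun x y => mul_pos (hp x) (hq y))
      fun μ hμ => (hmax μ hμ).trans ?_)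
    -- `hμstar_le` says `(t* - 1) * (⟨μ̂, Φ⟩ - ⟨p ⊗ q, Φ⟩) ≤ 0`, and both factors are `≥ 0`.
    nlinarith
  exact ⟨htstar_eq, by rw [htstar_eq, lineMap_apply_one]⟩

theorem gauge_projection_rationalizable {X Y : Type*} [Fintype X] [Fintype Y]
    (hX : 2 ≤ Fintype.card X) (hY : 2 ≤ Fintype.card Y)
    (p : X → ℝ) (q : Y → ℝ)
    (hp : ∀ x, 0 < p x) (hq : ∀ y, 0 < q y)
    (hpsum : ∑ x, p x = 1) (hqsum : ∑ y, q y = 1)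
    (μhat : X → Y → ℝ) (hμhat : μhat ∈ matchings p q)
    (hne : μhat ≠ fun x y => p x * q y)
    (tstar : ℝ)
    (htstar : IsGreatest {t : ℝ | 1 ≤ t ∧
      (fun x y => p x * q y + t * (μhat x y - p x * q y)) ∈ matchings p q} tstar) :
    letI μstar : X → Y → ℝ := fun x y => p x * q y + tstar * (μhat x y - p x * q y)
    μstar ∈ matchings p q ∧
      μstar ∉ intrinsicInterior ℝ (matchings p q) ∧
      (∃ Φ : X → Y → ℝ,
        (¬ ∃ (f : X → ℝ) (g : Y → ℝ), ∀ x y, Φ x y = f x + g y) ∧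
        ∀ μ ∈ matchings p q, pairing μ Φ ≤ pairing μstar Φ) ∧
      ((∃ Φ : X → Y → ℝ,
          (¬ ∃ (f : X → ℝ) (g : Y → ℝ), ∀ x y, Φ x y = f x + g y) ∧
          ∀ μ ∈ matchings p q, pairing μ Φ ≤ pairing μhat Φ) →
        tstar = 1 ∧ μstar = μhat) :=
  gauge_projection_rationalizable_general hX hY p q hp hq hpsum hqsum μhat hμhat tstar htstar
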